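/- Strict monotonicity of the cosine function: Φ is strictly decreasing on the interval [0,1], i.e. for all β₁, β₂ ∈ [0,1] with β₁ < β₂ one has Φ(β₂) < Φ(β₁). -/
import Mathlib


open scoped RealInnerProductSpace

noncomputable def dvec {n : ℕ} (g d : EuclideanSpace ℝ (Fin n)) (ξ β : ℝ) :
    EuclideanSpace ℝ (Fin n) :=
  β • d - ((1 - β) * ξ) • g

noncomputable def Phi {n : ℕ} (g d : EuclideanSpace ℝ (Fin n)) (ξ β : ℝ) : ℝ :=
  -⟪g, dvec g d ξ β⟫ / (‖g‖ * ‖dvec g d ξ β‖)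

set_option maxHeartbeats 1000000 in
/-- Pure scalar core of the monotonicity proof. -/
lemma phi_key_ineq (ξ G a K β₁ β₂ M₁ M₂ W : ℝ)
    (hξ : 0 < ξ) (hG : 0 < G) (hK : 0 < K) (hW : 0 < W)
    (h10 : 0 ≤ β₁) (h11 : β₁ ≤ 1) (h20 : 0 ≤ β₂) (h21 : β₂ ≤ 1) (hlt : β₁ < β₂)
    (hM₁ : 0 < M₁) (hM₂ : 0 < M₂)
    (hid₁ : G * M₁ ^ 2 - ((1 - β₁) * ξ * G - β₁ * a) ^ 2 = β₁ ^ 2 * K)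
    (hid₂ : G * M₂ ^ 2 - ((1 - β₂) * ξ * G - β₂ * a) ^ 2 = β₂ ^ 2 * K)
    (hm : β₂ ^ 2 * M₁ ^ 2 - β₁ ^ 2 * M₂ ^ 2 =
      ξ * (β₂ - β₁) * (ξ * G * (β₁ * (1 - β₂) + β₂ * (1 - β₁)) - 2 * a * β₁ * β₂)) :
    ((1 - β₂) * ξ * G - β₂ * a) / (W * M₂) < ((1 - β₁) * ξ * G - β₁ * a) / (W * M₁) := by
  have hξG : 0 < ξ * G := mul_pos hξ hG
  have hβ₂pos : 0 < β₂ := lt_of_le_of_lt h10 hlt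
  set N₁ : ℝ := (1 - β₁) * ξ * G - β₁ * a with hN₁
  set N₂ : ℝ := (1 - β₂) * ξ * G - β₂ * a with hN₂
  have hs : 0 < β₁ * (1 - β₂) + β₂ * (1 - β₁) := by
    rcases eq_or_lt_of_le h10 with h | h
    · nlinarith
    · nlinarith
  have e2 : N₁ ^ 2 * M₂ ^ 2 - N₂ ^ 2 * M₁ ^ 2 =
      K * (ξ * (β₂ - β₁) * (ξ * G * (β₁ * (1 - β₂) + β₂ * (1 - β₁)) - 2 * a * β₁ * β₂)) := by
    linear_combination M₁ ^ 2 * hid₂ - M₂ ^ 2 * hid₁ + K * hm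
  have key : N₂ * M₁ < N₁ * M₂ := by
    by_cases hN2 : 0 ≤ N₂
    · -- N₂ ≥ 0; show N₁ > 0 and use squared comparison
      have hN1 : 0 < N₁ := by
        by_contra h
        push_neg at h
        have hβ1pos : 0 < β₁ := by
          rcases eq_or_lt_of_le h10 with h' | h'
          · exfalso; rw [hN₁, ← h'] at h; nlinarith
          · exact h'
        have hc : 0 < ξ * G + a := by nlinarith
        have hd : N₂ < N₁ := by
          have := mul_pos (sub_pos.2 hlt) hc
          rw [hN₁, hN₂]; nlinarith
        linarith
      have hpos : 0 < ξ * G * (β₁ * (1 - β₂) + β₂ * (1 - β₁)) - 2 * a * β₁ * β₂ := by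
        rcases le_or_gt a 0 with haneg | hapos
        · nlinarith [mul_pos hξG hs, mul_nonneg (mul_nonneg (neg_nonneg.2 haneg) h10) h20]
        · have h2 : β₂ * a ≤ (1 - β₂) * ξ * G := by rw [hN₂] at hN2; linarith
          have h2b := mul_le_mul_of_nonneg_left h2 (by linarith : (0:ℝ) ≤ 2 * β₁)
          nlinarith [mul_pos (sub_pos.2 hlt) hξG]
      have hsq : N₂ ^ 2 * M₁ ^ 2 < N₁ ^ 2 * M₂ ^ 2 := by
        nlinarith [e2, mul_pos (mul_pos hK hξ) (mul_pos (sub_pos.2 hlt) hpos)]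
      by_contra hcon
      push_neg at hcon
      have hQ : 0 ≤ N₂ * M₁ := mul_nonneg hN2 hM₁.le
      have := pow_le_pow_left₀ (mul_nonneg hN1.le hM₂.le) hcon 2
      nlinarith [hsq]
    · push_neg at hN2
      rcases le_or_gt N₁ 0 with hN1 | hN1
      · have hβ1pos : 0 < β₁ := by
          rcases eq_or_lt_of_le h10 with h' | h'
          · exfalso; rw [hN₁, ← h'] at hN1; nlinarith
          · exact h'
        have h1 : (1 - β₁) * ξ * G ≤ β₁ * a := by rw [hN₁] at hN1; linarith
        have hapos : 0 < a := by
          nlinarith [mul_nonneg (by linarith : (0:ℝ) ≤ 1 - β₁) hξG.le]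
        have h1b := mul_le_mul_of_nonneg_left h1 (by linarith : (0:ℝ) ≤ 2 * β₂)
        have hneg : ξ * G * (β₁ * (1 - β₂) + β₂ * (1 - β₁)) - 2 * a * β₁ * β₂ < 0 := by
          nlinarith [mul_pos (sub_pos.2 hlt) hξG]
        have hsq : N₁ ^ 2 * M₂ ^ 2 < N₂ ^ 2 * M₁ ^ 2 := by
          nlinarith [e2, mul_pos (mul_pos hK hξ) (mul_pos (sub_pos.2 hlt) (neg_pos.2 hneg))]
        by_contra hcon
        push_neg at hcon
        -- N₁ * M₂ ≤ N₂ * M₁ < 0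
        have hP : N₂ * M₁ < 0 := mul_neg_of_neg_of_pos hN2 hM₁
        have h3 : (0:ℝ) ≤ -(N₂ * M₁) := by linarith
        have h4 : -(N₂ * M₁) ≤ -(N₁ * M₂) := by linarith
        have := pow_le_pow_left₀ h3 h4 2
        nlinarith [hsq]
      · have ha1 : N₂ * M₁ < 0 := mul_neg_of_neg_of_pos hN2 hM₁
        have ha2 : 0 < N₁ * M₂ := mul_pos hN1 hM₂
        linarith
  rw [div_lt_div_iff₀ (by positivity) (by positivity)]
  nlinarith [mul_lt_mul_of_pos_left key hW]

/-- Strict monotonicity of the cosine function Φ on [0,1]. -/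
theorem Phi_strictAntiOn {n : ℕ} (g d : EuclideanSpace ℝ (Fin n))
    (hind : LinearIndependent ℝ ![g, d]) (ε ξ : ℝ)
    (hε : ε ∈ Set.Ioo (0 : ℝ) 1) (hξ : 0 < ξ)
    (hviol : -⟪g, d⟫ < ε * ‖g‖ * ‖d‖) :
    ∀ β₁ ∈ Set.Icc (0 : ℝ) 1, ∀ β₂ ∈ Set.Icc (0 : ℝ) 1, β₁ < β₂ →
      Phi g d ξ β₂ < Phi g d ξ β₁ := by
  intro β₁ hβ₁ β₂ hβ₂ hlt
  obtain ⟨h10, h11⟩ := hβ₁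
  obtain ⟨h20, h21⟩ := hβ₂
  have hpair := LinearIndependent.pair_iff.1 hind
  have hg : g ≠ 0 := by
    intro h
    have := (hpair 1 0 (by simp [h])).1
    norm_num at this
  have hgn : 0 < ‖g‖ := norm_pos_iff.2 hg
  have hcs1 : ⟪g, d⟫ < ‖g‖ * ‖d‖ := by
    refine inner_lt_norm_mul_iff_real.2 ?_
    intro h
    have h0 : ‖d‖ • g + (-‖g‖) • d = 0 := by
      rw [neg_smul, h]; abel
    have h1 := (hpair _ _ h0).2
    have : ‖g‖ = 0 := by simpa using h1
    exact hgn.ne' this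
  have hcs2 : -⟪g, d⟫ < ‖g‖ * ‖d‖ := by
    have h3 : ⟪g, -d⟫ < ‖g‖ * ‖-d‖ := by
      refine inner_lt_norm_mul_iff_real.2 ?_
      intro h
      have h0 : ‖-d‖ • g + ‖g‖ • d = 0 := by rw [h]; simp
      have h1 := (hpair _ _ h0).2
      exact hgn.ne' h1
    simpa [inner_neg_right] using h3
  set a : ℝ := ⟪g, d⟫ with ha
  have hK : a ^ 2 < ‖g‖ ^ 2 * ‖d‖ ^ 2 := by nlinarith [hcs1, hcs2]
  have hdv : ∀ β ∈ Set.Icc (0:ℝ) 1, dvec g d ξ β ≠ 0 := by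
    intro β hβ h
    have h0 : (-((1 - β) * ξ)) • g + β • d = 0 := by
      rw [neg_smul, dvec] at *
      rw [← h]; abel
    obtain ⟨hs, ht⟩ := hpair _ _ h0
    rw [ht] at hs
    simp only [sub_zero, one_mul, neg_eq_zero] at hs
    nlinarith [hξ]
  have hM₁pos : 0 < ‖dvec g d ξ β₁‖ := norm_pos_iff.2 (hdv β₁ ⟨h10, h11⟩)
  have hM₂pos : 0 < ‖dvec g d ξ β₂‖ := norm_pos_iff.2 (hdv β₂ ⟨h20, h21⟩)
  have hinner : ∀ β : ℝ, -⟪g, dvec g d ξ β⟫ = (1 - β) * ξ * ‖g‖ ^ 2 - β * a := by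
    intro β
    rw [dvec, inner_sub_right, real_inner_smul_right, real_inner_smul_right,
      real_inner_self_eq_norm_sq]
    ring
  have hnormsq : ∀ β : ℝ, ‖dvec g d ξ β‖ ^ 2 =
      β ^ 2 * ‖d‖ ^ 2 - 2 * β * (1 - β) * ξ * a + (1 - β) ^ 2 * ξ ^ 2 * ‖g‖ ^ 2 := by
    intro β
    have h1 : ‖β • d‖ ^ 2 = β ^ 2 * ‖d‖ ^ 2 := by
      rw [norm_smul, Real.norm_eq_abs, mul_pow, sq_abs]
    have h2 : ‖((1 - β) * ξ) • g‖ ^ 2 = (1 - β) ^ 2 * ξ ^ 2 * ‖g‖ ^ 2 := by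
      rw [norm_smul, Real.norm_eq_abs, mul_pow, sq_abs]; ring
    have h3 : ⟪β • d, ((1 - β) * ξ) • g⟫ = β * ((1 - β) * ξ) * a := by
      rw [real_inner_smul_left, real_inner_smul_right, real_inner_comm g d, ← ha]
      ring
    rw [dvec, norm_sub_sq_real, h1, h2, h3]
    ring
  have main := phi_key_ineq ξ (‖g‖ ^ 2) a (‖g‖ ^ 2 * ‖d‖ ^ 2 - a ^ 2) β₁ β₂
    ‖dvec g d ξ β₁‖ ‖dvec g d ξ β₂‖ ‖g‖ hξ (by positivity) (by linarith) hgn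
    h10 h11 h20 h21 hlt hM₁pos hM₂pos
    (by rw [hnormsq]; ring) (by rw [hnormsq]; ring)
    (by rw [hnormsq, hnormsq]; ring)
  rw [Phi, Phi, hinner, hinner]
  exact main
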